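/- arXiv:2402.12344 — 3 statements merged into one kernel-verified Lean document; each statement's English description precedes it below -/
import Mathlib

section
/- Let X, Y be finite simple graphs with n = |V(Y)|, let p = (x, p_y) and q = (x, q_y) span an inner edge of Z = X[Y] (so p_y q_y ∈ E(Y)). Then the number of vertices r of Z adjacent to both p and q equals |N_Y(p_y) ∩ N_Y(q_y)| + |N_X(x)|·n. -/
/-- The lexicographic product of two simple graphs. -/
def lexProd {V W : Type*} (X : SimpleGraph V) (Y : SimpleGraph W) : SimpleGraph (V × W) where
  Adj p q := X.Adj p.1 q.1 ∨ (p.1 = q.1 ∧ Y.Adj p.2 q.2)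
  symm := by
    constructor
    rintro p q (h | ⟨h1, h2⟩)
    · exact Or.inl h.symm
    · exact Or.inr ⟨h1.symm, h2.symm⟩
  loopless := by
    constructor
    rintro p (h | ⟨h1, h2⟩)
    · exact X.irrefl h
    · exact Y.irrefl h2

namespace lexProd

variable {V W : Type*} (X : SimpleGraph V) (Y : SimpleGraph W)

@[simp]
theorem adj_iff {p q : V × W} :
    (lexProd X Y).Adj p q ↔ X.Adj p.1 q.1 ∨ (p.1 = q.1 ∧ Y.Adj p.2 q.2) := Iff.rfl

theorem commonNeighbors_inner (x : V) (a b : W) :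
    (lexProd X Y).commonNeighbors (x, a) (x, b) =
      {x} ×ˢ Y.commonNeighbors a b ∪ X.neighborSet x ×ˢ Set.univ := by
  ext ⟨u, w⟩
  simp only [SimpleGraph.mem_commonNeighbors, adj_iff, Set.mem_union, Set.mem_prod,
    Set.mem_singleton_iff, SimpleGraph.mem_neighborSet, Set.mem_univ, and_true]
  rw [@eq_comm _ u x]
  tauto

theorem ncard_commonNeighbors_inner [Finite V] [Finite W] (x : V) (a b : W) :
    ((lexProd X Y).commonNeighbors (x, a) (x, b)).ncard =
      (Y.commonNeighbors a b).ncard + (X.neighborSet x).ncard * Nat.card W := by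
  have hdisj : Disjoint ({x} ×ˢ Y.commonNeighbors a b) (X.neighborSet x ×ˢ Set.univ) :=
    Set.disjoint_prod.2 <| Or.inl <| Set.disjoint_singleton_left.2 <| X.notMem_neighborSet_self
  rw [commonNeighbors_inner, Set.ncard_union_eq hdisj, Set.ncard_prod, Set.ncard_prod,
    Set.ncard_singleton, one_mul, Set.ncard_univ]

end lexProd

theorem inner_edge_common_neighbours_general {V W : Type*} [Fintype V] [Fintype W]
    (X : SimpleGraph V) (Y : SimpleGraph W) (x : V) (py qy : W) :
    {r : V × W | (lexProd X Y).Adj r (x, py) ∧ (lexProd X Y).Adj r (x, qy)}.ncard =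
      (Y.neighborSet py ∩ Y.neighborSet qy).ncard +
        (X.neighborSet x).ncard * Fintype.card W := by
  have hset : {r : V × W | (lexProd X Y).Adj r (x, py) ∧ (lexProd X Y).Adj r (x, qy)} =
      (lexProd X Y).commonNeighbors (x, py) (x, qy) := by
    ext r
    simp only [Set.mem_ofPred_eq, SimpleGraph.mem_commonNeighbors, SimpleGraph.adj_comm _ r]
  rw [hset, lexProd.ncard_commonNeighbors_inner, ← SimpleGraph.commonNeighbors_eq,
    Nat.card_eq_fintype_card]

/-- Common-neighbour count for an inner edge of `X[Y]`: if `p = (x, p_y)` and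
`q = (x, q_y)` span an inner edge (so `p_y q_y ∈ E(Y)`), then the number of common
neighbours of `p` and `q` is `|N_Y(p_y) ∩ N_Y(q_y)| + |N_X(x)| · n`, where `n = |V(Y)|`. -/
theorem inner_edge_common_neighbours {V W : Type*} [Fintype V] [Fintype W]
    (X : SimpleGraph V) (Y : SimpleGraph W) (x : V) (py qy : W) (h : Y.Adj py qy) :
    {r : V × W | (lexProd X Y).Adj r (x, py) ∧ (lexProd X Y).Adj r (x, qy)}.ncard =
      (Y.neighborSet py ∩ Y.neighborSet qy).ncard +
        (X.neighborSet x).ncard * Fintype.card W :=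
  inner_edge_common_neighbours_general X Y x py qy
end

section
/- Let X, Y be finite simple graphs with n = |V(Y)|, and let p = (p_x, p_y), q = (q_x, q_y) span an outer edge of Z = X[Y] (so p_x q_x ∈ E(X)). Then the number of vertices r of Z adjacent to both p and q equals |N_Y(p_y)| + |N_Y(q_y)| + |N_X(p_x) ∩ N_X(q_x)|·n. -/
section LexProd

open SimpleGraph

variable {V W : Type*} {X : SimpleGraph V} {Y : SimpleGraph W}

@[simp]
lemma lexProd_adj {p q : V × W} :
    (lexProd X Y).Adj p q ↔ X.Adj p.1 q.1 ∨ (p.1 = q.1 ∧ Y.Adj p.2 q.2) :=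
  Iff.rfl

lemma lexProd_commonNeighbors_of_adj {px qx : V} (h : X.Adj px qx) (py qy : W) :
    (lexProd X Y).commonNeighbors (px, py) (qx, qy) =
      {px} ×ˢ Y.neighborSet py ∪ {qx} ×ˢ Y.neighborSet qy ∪
        X.commonNeighbors px qx ×ˢ Set.univ := by
  ext ⟨rx, ry⟩
  simp only [mem_commonNeighbors, lexProd_adj, Set.mem_union, Set.mem_prod,
    Set.mem_singleton_iff, mem_neighborSet, Set.mem_univ, and_true]
  constructor
  · rintro ⟨hp | ⟨rfl, hp⟩, hq | ⟨rfl, hq⟩⟩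
    · exact Or.inr ⟨hp, hq⟩
    · exact Or.inl (Or.inr ⟨rfl, hq⟩)
    · exact Or.inl (Or.inl ⟨rfl, hp⟩)
    · exact absurd rfl h.ne
  · rintro ((⟨rfl, hp⟩ | ⟨rfl, hq⟩) | ⟨hp, hq⟩)
    · exact ⟨Or.inr ⟨rfl, hp⟩, Or.inl h.symm⟩
    · exact ⟨Or.inl h, Or.inr ⟨rfl, hq⟩⟩
    · exact ⟨Or.inl hp, Or.inl hq⟩

lemma ncard_lexProd_commonNeighbors_of_adj [Finite V] [Fintype W] {px qx : V}
    (h : X.Adj px qx) (py qy : W) :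
    ((lexProd X Y).commonNeighbors (px, py) (qx, qy)).ncard =
      (Y.neighborSet py).ncard + (Y.neighborSet qy).ncard +
        (X.commonNeighbors px qx).ncard * Fintype.card W := by
  have hcopies : Disjoint ({px} ×ˢ Y.neighborSet py) ({qx} ×ˢ Y.neighborSet qy) :=
    Set.disjoint_prod.2 (Or.inl (Set.disjoint_singleton.2 h.ne))
  have hcommon : Disjoint ({px} ×ˢ Y.neighborSet py ∪ {qx} ×ˢ Y.neighborSet qy)
      (X.commonNeighbors px qx ×ˢ Set.univ) :=
    Set.disjoint_union_left.2
      ⟨Set.disjoint_prod.2 (Or.inl (Set.disjoint_singleton_left.2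
          (X.notMem_commonNeighbors_left px qx))),
        Set.disjoint_prod.2 (Or.inl (Set.disjoint_singleton_left.2
          (X.notMem_commonNeighbors_right px qx)))⟩
  rw [lexProd_commonNeighbors_of_adj h, Set.ncard_union_eq hcommon,
    Set.ncard_union_eq hcopies, Set.ncard_prod, Set.ncard_prod, Set.ncard_prod,
    Set.ncard_singleton, Set.ncard_singleton, Set.ncard_univ, Nat.card_eq_fintype_card,
    one_mul, one_mul]

end LexProd

/-- Common-neighbour count for an outer edge of `X[Y]`: if `p = (p_x, p_y)` and
`q = (q_x, q_y)` span an outer edge (so `p_x q_x ∈ E(X)`), then the number of common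
neighbours of `p` and `q` is `|N_Y(p_y)| + |N_Y(q_y)| + |N_X(p_x) ∩ N_X(q_x)| · n`,
where `n = |V(Y)|`. -/
theorem outer_edge_common_neighbours {V W : Type*} [Fintype V] [Fintype W]
    (X : SimpleGraph V) (Y : SimpleGraph W) (px qx : V) (py qy : W) (h : X.Adj px qx) :
    {r : V × W | (lexProd X Y).Adj r (px, py) ∧ (lexProd X Y).Adj r (qx, qy)}.ncard =
      (Y.neighborSet py).ncard + (Y.neighborSet qy).ncard +
        (X.neighborSet px ∩ X.neighborSet qx).ncard * Fintype.card W := by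
  have hcommon : {r : V × W | (lexProd X Y).Adj r (px, py) ∧ (lexProd X Y).Adj r (qx, qy)} =
      (lexProd X Y).commonNeighbors (px, py) (qx, qy) := by
    ext r
    simp only [Set.mem_ofPred_eq, SimpleGraph.mem_commonNeighbors, (lexProd X Y).adj_comm r]
  rw [hcommon, ← SimpleGraph.commonNeighbors_eq]
  exact ncard_lexProd_commonNeighbors_of_adj h py qy
end

section
/- Let X, Y be finite simple graphs with n = |V(Y)| ≥ 1, and let p = (p_x, p_y), q = (q_x, q_y) span an outer edge of Z = X[Y]. Then the number of vertices r of Z non-adjacent to both p and q (and distinct from p and q) equals |N_{X̄}(p_x) ∩ N_{X̄}(q_x)|·n, where X̄ denotes the complement of X. -/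
open SimpleGraph Set

section LexProd

variable {V W : Type*} (X : SimpleGraph V) (Y : SimpleGraph W)

theorem lexProd_adj_iff_of_fst_ne {r s : V × W} (hrs : r.1 ≠ s.1) :
    (lexProd X Y).Adj r s ↔ X.Adj r.1 s.1 := by
  simp [lexProd, hrs]

theorem lexProd_adj_of_fst_adj {r s : V × W} (h : X.Adj r.1 s.1) : (lexProd X Y).Adj r s :=
  Or.inl h

variable {X}

theorem commonNeighbors_compl_lexProd_of_adj {px qx : V} (h : X.Adj px qx) (py qy : W) :
    (lexProd X Y)ᶜ.commonNeighbors (px, py) (qx, qy) = Xᶜ.commonNeighbors px qx ×ˢ univ := by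
  ext r
  simp only [mem_commonNeighbors, compl_adj, mem_prod, mem_univ, and_true]
  constructor
  · rintro ⟨⟨hpr, hnpr⟩, ⟨hqr, hnqr⟩⟩
    have hpx : px ≠ r.1 := fun hp => hnqr (lexProd_adj_of_fst_adj X Y (hp ▸ h.symm))
    have hqx : qx ≠ r.1 := fun hq => hnpr (lexProd_adj_of_fst_adj X Y (hq ▸ h))
    rw [lexProd_adj_iff_of_fst_ne X Y hpx] at hnpr
    rw [lexProd_adj_iff_of_fst_ne X Y hqx] at hnqr
    exact ⟨⟨hpx, hnpr⟩, ⟨hqx, hnqr⟩⟩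
  · rintro ⟨⟨hpx, hnpr⟩, ⟨hqx, hnqr⟩⟩
    refine ⟨⟨fun hp => hpx (congrArg Prod.fst hp), ?_⟩, ⟨fun hq => hqx (congrArg Prod.fst hq), ?_⟩⟩
    · rwa [lexProd_adj_iff_of_fst_ne X Y hpx]
    · rwa [lexProd_adj_iff_of_fst_ne X Y hqx]

end LexProd

theorem outer_edge_common_non_neighbours_general {V W : Type*} [Fintype W]
    (X : SimpleGraph V) (Y : SimpleGraph W) (px qx : V) (py qy : W) (h : X.Adj px qx) :
    {r : V × W | r ≠ (px, py) ∧ r ≠ (qx, qy) ∧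
        ¬ (lexProd X Y).Adj r (px, py) ∧ ¬ (lexProd X Y).Adj r (qx, qy)}.ncard =
      ((Xᶜ).neighborSet px ∩ (Xᶜ).neighborSet qx).ncard * Fintype.card W := by
  have hset : {r : V × W | r ≠ (px, py) ∧ r ≠ (qx, qy) ∧
      ¬ (lexProd X Y).Adj r (px, py) ∧ ¬ (lexProd X Y).Adj r (qx, qy)} =
      (lexProd X Y)ᶜ.commonNeighbors (px, py) (qx, qy) := by
    ext r
    simp only [mem_ofPred_eq, mem_commonNeighbors, compl_adj, (lexProd X Y).adj_comm r]
    grind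
  rw [hset, commonNeighbors_compl_lexProd_of_adj Y h, ncard_prod, ncard_univ,
    Nat.card_eq_fintype_card, commonNeighbors]

/-- Common-non-neighbour count for an outer edge of `X[Y]`: if `p = (p_x, p_y)` and
`q = (q_x, q_y)` span an outer edge, then the number of vertices distinct from `p` and `q`
and non-adjacent to both is `|N_{X̄}(p_x) ∩ N_{X̄}(q_x)| · n`, where `n = |V(Y)| ≥ 1` and
`X̄` is the complement of `X`. -/
theorem outer_edge_common_non_neighbours {V W : Type*} [Fintype V] [Fintype W] [Nonempty W]
    (X : SimpleGraph V) (Y : SimpleGraph W) (px qx : V) (py qy : W) (h : X.Adj px qx) :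
    {r : V × W | r ≠ (px, py) ∧ r ≠ (qx, qy) ∧
        ¬ (lexProd X Y).Adj r (px, py) ∧ ¬ (lexProd X Y).Adj r (qx, qy)}.ncard =
      ((Xᶜ).neighborSet px ∩ (Xᶜ).neighborSet qx).ncard * Fintype.card W :=
  outer_edge_common_non_neighbours_general X Y px qx py qy h
end
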